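/- arXiv:2207.02760 — 5 statements merged into one kernel-verified Lean document; each statement's English description precedes it below -/
import Mathlib

section
/- Let n : ℕ, A, M : Matrix (Fin n) (Fin n) ℝ, v : Fin n → ℝ, and let π be a permutation of Fin n with permutation matrix P(π). Then for every d : ℕ, (((P(π) * A * P(π)ᵀ)^d) ∘ (P(π) * M * P(π)ᵀ)) *ᵥ (P(π) *ᵥ v) = P(π) *ᵥ ((A^d ∘ M) *ᵥ v). That is, the masked feature-propagation used by TREE-G's dynamic features is equivariant under relabeling the vertices by π (proof of Lemma 4.1). -/
open Matrix

/-- The permutation matrix of `π`: `P(π) i j = 1` if `j = π i` and `0` otherwise. -/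
def permMatrix {n : ℕ} (π : Equiv.Perm (Fin n)) : Matrix (Fin n) (Fin n) ℝ :=
  fun i j => if j = π i then 1 else 0

lemma permMatrix_mulVec {n : ℕ} (π : Equiv.Perm (Fin n)) (v : Fin n → ℝ) :
    permMatrix π *ᵥ v = fun i => v (π i) := by
  funext i
  simp [permMatrix, mulVec, dotProduct]

lemma permMatrix_conj {n : ℕ} (π : Equiv.Perm (Fin n)) (X : Matrix (Fin n) (Fin n) ℝ) :
    permMatrix π * X * (permMatrix π)ᵀ = X.submatrix π π := by
  ext i j
  simp [Matrix.mul_apply, Matrix.transpose_apply, permMatrix, boole_mul, mul_boole,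
    Finset.sum_ite_eq, Finset.sum_ite_eq']

/-- The masked feature propagation used by TREE-G's dynamic features is
equivariant under relabeling the vertices by `π`. -/
theorem masked_propagation_perm_equivariant (n : ℕ) (A M : Matrix (Fin n) (Fin n) ℝ)
    (v : Fin n → ℝ) (π : Equiv.Perm (Fin n)) (d : ℕ) :
    (Matrix.hadamard ((permMatrix π * A * (permMatrix π)ᵀ) ^ d)
        (permMatrix π * M * (permMatrix π)ᵀ)) *ᵥ (permMatrix π *ᵥ v) =
      permMatrix π *ᵥ ((Matrix.hadamard (A ^ d) M) *ᵥ v) := by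
  rw [permMatrix_conj, permMatrix_conj, permMatrix_mulVec, permMatrix_mulVec]
  have hpow : (A.submatrix π π) ^ d = (A ^ d).submatrix π π := by
    have := map_pow (Matrix.reindexAlgEquiv ℝ ℝ π.symm) A d
    simpa [Matrix.reindexAlgEquiv, Matrix.reindex] using this.symm
  rw [hpow]
  funext i
  simp only [mulVec, dotProduct, Matrix.hadamard_apply, Matrix.submatrix_apply]
  exact Fintype.sum_equiv π _ _ (fun j => rfl)
end

section
/- Let n : ℕ, A, M : Matrix (Fin n) (Fin n) ℝ, v : Fin n → ℝ, S : Finset (Fin n), and let π be a permutation of Fin n with permutation matrix P(π). Then for every d : ℕ, ∑ over i in the preimage Finset π⁻¹(S) of ((((P(π) * A * P(π)ᵀ)^d) ∘ (P(π) * M * P(π)ᵀ)) *ᵥ (P(π) *ᵥ v)) i equals ∑ over j in S of ((A^d ∘ M) *ᵥ v) j. That is, TREE-G's subset-restricted aggregation (used for target, target-source, and cycle walks in graph-labeling tasks) is invariant under relabeling the vertices. -/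
open Matrix

lemma conj_apply {n : ℕ} (π : Equiv.Perm (Fin n)) (B : Matrix (Fin n) (Fin n) ℝ)
    (i j : Fin n) : (permMatrix π * B * (permMatrix π)ᵀ) i j = B (π i) (π j) := by
  simp [Matrix.mul_apply, permMatrix, Matrix.transpose_apply, Finset.sum_ite_eq,
    Finset.mul_sum]

lemma conj_pow' {n : ℕ} (π : Equiv.Perm (Fin n)) (B : Matrix (Fin n) (Fin n) ℝ)
    (d : ℕ) (i j : Fin n) :
    ((permMatrix π * B * (permMatrix π)ᵀ) ^ d) i j = (B ^ d) (π i) (π j) := by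
  induction d generalizing i j with
  | zero => simp [Matrix.one_apply, Equiv.apply_eq_iff_eq]
  | succ d ih =>
      rw [pow_succ, pow_succ, Matrix.mul_apply, Matrix.mul_apply]
      rw [← Equiv.sum_comp π (fun k => (B ^ d) (π i) k * B k (π j))]
      exact Finset.sum_congr rfl fun k _ => by rw [ih, conj_apply]

/-- TREE-G's subset-restricted aggregation is invariant under relabeling the
vertices: summing the masked propagation of the relabeled graph over the
preimage of `S` under `π` equals summing the masked propagation of the original
graph over `S`. -/
theorem subset_restricted_sum_perm_invariant (n : ℕ) (A M : Matrix (Fin n) (Fin n) ℝ)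
    (v : Fin n → ℝ) (S : Finset (Fin n)) (π : Equiv.Perm (Fin n)) (d : ℕ) :
    ∑ i ∈ S.preimage π (Set.injOn_of_injective π.injective),
        ((Matrix.hadamard ((permMatrix π * A * (permMatrix π)ᵀ) ^ d)
            (permMatrix π * M * (permMatrix π)ᵀ)) *ᵥ (permMatrix π *ᵥ v)) i =
      ∑ j ∈ S, ((Matrix.hadamard (A ^ d) M) *ᵥ v) j := by
  have hmv : ∀ w : Fin n → ℝ, ∀ i, (permMatrix π *ᵥ w) i = w (π i) := by
    intro w i
    simp [Matrix.mulVec, dotProduct, permMatrix, Finset.sum_ite_eq, Finset.sum_ite_eq', Finset.mem_univ, if_true]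
  have key : ∀ i, ((Matrix.hadamard ((permMatrix π * A * (permMatrix π)ᵀ) ^ d)
      (permMatrix π * M * (permMatrix π)ᵀ)) *ᵥ (permMatrix π *ᵥ v)) i =
      ((Matrix.hadamard (A ^ d) M) *ᵥ v) (π i) := by
    intro i
    simp only [Matrix.mulVec, dotProduct, Matrix.hadamard_apply, conj_pow', conj_apply,
      permMatrix, ite_mul, one_mul, zero_mul, Finset.sum_ite_eq, Finset.sum_ite_eq', Finset.mem_univ, if_true]
    exact Equiv.sum_comp π (fun k => (A ^ d) (π i) k * M (π i) k * v k)
  rw [Finset.sum_congr rfl fun i _ => key i]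
  exact Finset.sum_preimage π S _ _ (by intro x hx hc; exact absurd ⟨π.symm x, π.apply_symm_apply x⟩ hc)
end

section
/- Let f₁ = ![1, 1, -1, -1] and f₂ = ![1, -1, 1, -1] in Fin 4 → ℝ, and let A₁, A₂ : Matrix (Fin 4) (Fin 4) ℝ be as follows: A₁ has (A₁) 0 3 = (A₁) 3 0 = 1 and all other entries 0; A₂ has (A₂) 1 2 = (A₂) 2 1 = 1 and all other entries 0. Then for every d : ℕ and each k ∈ {1, 2}, there exists a permutation σ of Fin 4 such that A₂^d *ᵥ f_k = (A₁^d *ᵥ f_k) ∘ σ. That is, the propagated feature vectors of the two graphs of Lemma 4.3 agree up to a permutation of entries for every propagation depth d and both features. -/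
open Matrix

/-- First coordinate feature: the `x`-axis position of each vertex. -/
def f₁ : Fin 4 → ℝ := ![1, 1, -1, -1]

/-- Second coordinate feature: the `y`-axis position of each vertex. -/
def f₂ : Fin 4 → ℝ := ![1, -1, 1, -1]

/-- Adjacency matrix of `G₁`: the single undirected edge `{0, 3}`. -/
def A₁ : Matrix (Fin 4) (Fin 4) ℝ :=
  !![0, 0, 0, 1; 0, 0, 0, 0; 0, 0, 0, 0; 1, 0, 0, 0]

/-- Adjacency matrix of `G₂`: the single undirected edge `{1, 2}`. -/
def A₂ : Matrix (Fin 4) (Fin 4) ℝ :=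
  !![0, 0, 0, 0; 0, 0, 1, 0; 0, 1, 0, 0; 0, 0, 0, 0]

/-- The permutation 0↦1, 1↦0, 2↦3, 3↦2. -/
def σa : Equiv.Perm (Fin 4) :=
  ⟨![1, 0, 3, 2], ![1, 0, 3, 2], by decide, by decide⟩

/-- The permutation 0↦1, 1↦3, 2↦0, 3↦2. -/
def σb : Equiv.Perm (Fin 4) :=
  ⟨![1, 3, 0, 2], ![2, 0, 3, 1], by decide, by decide⟩

lemma cube1 : A₁ * A₁ * A₁ = A₁ := by
  ext i j
  fin_cases i <;> fin_cases j <;>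
    simp [A₁, Matrix.mul_apply, Fin.sum_univ_four, Matrix.vecHead, Matrix.vecTail]

lemma cube2 : A₂ * A₂ * A₂ = A₂ := by
  ext i j
  fin_cases i <;> fin_cases j <;>
    simp [A₂, Matrix.mul_apply, Fin.sum_univ_four, Matrix.vecHead, Matrix.vecTail]

lemma pow_cases : ∀ d : ℕ,
    (A₁ ^ (d + 1) = A₁ ∧ A₂ ^ (d + 1) = A₂) ∨
    (A₁ ^ (d + 1) = A₁ * A₁ ∧ A₂ ^ (d + 1) = A₂ * A₂) := by
  intro d
  induction d with
  | zero => left; simp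
  | succ n ih =>
    rcases ih with ⟨h1, h2⟩ | ⟨h1, h2⟩
    · right
      constructor <;> rw [pow_succ] <;> [rw [h1]; rw [h2]]
    · left
      constructor <;> rw [pow_succ]
      · rw [h1, cube1]
      · rw [h2, cube2]

/-- For every propagation depth `d` and both features, the propagated feature
vectors of the two graphs of Lemma 4.3 agree up to a permutation of entries. -/
theorem propagated_features_agree_up_to_perm :
    ∀ d : ℕ, ∀ f ∈ ({f₁, f₂} : Set (Fin 4 → ℝ)),
      ∃ σ : Equiv.Perm (Fin 4), A₂ ^ d *ᵥ f = (A₁ ^ d *ᵥ f) ∘ σ := by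
  intro d f hf
  match d with
  | 0 =>
    refine ⟨1, ?_⟩
    simp [Matrix.one_mulVec]
  | d + 1 =>
    rcases hf with rfl | rfl
    · refine ⟨σa, ?_⟩
      rcases pow_cases d with ⟨h1, h2⟩ | ⟨h1, h2⟩ <;> rw [h1, h2] <;>
        funext i <;> fin_cases i <;>
          simp [A₁, A₂, f₁, σa, Matrix.mulVec, Matrix.mul_apply, dotProduct,
            Fin.sum_univ_four, Equiv.coe_fn_mk]
    · refine ⟨σb, ?_⟩
      rcases pow_cases d with ⟨h1, h2⟩ | ⟨h1, h2⟩ <;> rw [h1, h2] <;>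
        funext i <;> fin_cases i <;>
          simp [A₁, A₂, f₂, σb, Matrix.mulVec, Matrix.mul_apply, dotProduct,
            Fin.sum_univ_four, Equiv.coe_fn_mk]
end

section
/- Let f₁ = ![1, 1, -1, -1] and f₂ = ![1, -1, 1, -1] in Fin 4 → ℝ, and let A₁, A₂ : Matrix (Fin 4) (Fin 4) ℝ be the adjacency matrices of the single-edge graphs G₁ (edge {0,3}) and G₂ (edge {1,2}). Then for every d : ℕ, each k ∈ {1, 2}, every permutation-invariant aggregation AGG : (Fin 4 → ℝ) → ℝ (i.e. AGG (w ∘ σ) = AGG w for all w and all permutations σ of Fin 4), and every threshold θ : ℝ, AGG (A₁^d *ᵥ f_k) > θ if and only if AGG (A₂^d *ᵥ f_k) > θ. That is, no unmasked split criterion of the form AGG(A^d *ᵥ f_k) > θ can separate G₁ from G₂: TREE-G without subsets cannot distinguish these graphs (first half of Lemma 4.3). -/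
open Matrix

lemma key (A B : Matrix (Fin 4) (Fin 4) ℝ) (σ : Equiv.Perm (Fin 4))
    (hAB : ∀ i j, B i j = A (σ i) (σ j)) (f : Fin 4 → ℝ) (hf : f ∘ σ = f) :
    ∀ d : ℕ, B ^ d *ᵥ f = (A ^ d *ᵥ f) ∘ σ := by
  have step : ∀ w : Fin 4 → ℝ, B *ᵥ (w ∘ σ) = (A *ᵥ w) ∘ σ := by
    intro w
    funext i
    simp only [Function.comp_apply, mulVec, dotProduct, Function.comp, hAB]
    exact Equiv.sum_comp σ (fun k => A (σ i) k * w k)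
  intro d
  induction d with
  | zero => simp only [pow_zero, one_mulVec]; exact hf.symm
  | succ n ih =>
      rw [pow_succ', pow_succ', ← mulVec_mulVec, ← mulVec_mulVec, ih, step]

/-- No unmasked split criterion `AGG(A^d *ᵥ f_k) > θ` with a permutation-invariant
aggregation `AGG` can separate `G₁` from `G₂`: TREE-G without subsets cannot
distinguish these graphs. -/
theorem no_unmasked_split_separates :
    ∀ d : ℕ, ∀ f ∈ ({f₁, f₂} : Set (Fin 4 → ℝ)),
      ∀ AGG : (Fin 4 → ℝ) → ℝ,
        (∀ (w : Fin 4 → ℝ) (σ : Equiv.Perm (Fin 4)), AGG (w ∘ σ) = AGG w) →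
        ∀ θ : ℝ, AGG (A₁ ^ d *ᵥ f) > θ ↔ AGG (A₂ ^ d *ᵥ f) > θ := by
  intro d f hf AGG hAGG θ
  rcases hf with rfl | rfl
  · have h := key A₁ A₂ (Equiv.swap 0 1 * Equiv.swap 2 3)
      (by intro i j; fin_cases i <;> fin_cases j <;>
        simp [A₁, A₂, Equiv.swap_apply_def, Matrix.vecHead, Matrix.vecTail])
      f₁ (by funext i; fin_cases i <;>
        simp [f₁, Equiv.swap_apply_def, Matrix.vecHead, Matrix.vecTail]) d
    rw [h, hAGG]
  · have h := key A₁ A₂ (Equiv.swap 0 2 * Equiv.swap 1 3)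
      (by intro i j; fin_cases i <;> fin_cases j <;>
        simp [A₁, A₂, Equiv.swap_apply_def, Matrix.vecHead, Matrix.vecTail])
      f₂ (by funext i; fin_cases i <;>
        simp [f₂, Equiv.swap_apply_def, Matrix.vecHead, Matrix.vecTail]) d
    rw [h, hAGG]
end

section
/- There exist two simple graphs G₁ and G₂ on Fin 8, each 4-regular (every vertex has degree 4), such that for every d : ℕ the constant-feature propagations coincide, (G₁.adjMatrix ℕ)^d *ᵥ (fun _ => 1) = (G₂.adjMatrix ℕ)^d *ᵥ (fun _ => 1), and yet Matrix.trace ((G₁.adjMatrix ℕ)^3) ≠ Matrix.trace ((G₂.adjMatrix ℕ)^3). In particular G₁ and G₂ are not isomorphic, they are indistinguishable by any unmasked dynamic feature of the constant feature (and by message-passing on constant features), but they are separated by TREE-G's cycle-walk split rule ∑((A^3 ∘ I) *ᵥ 𝟙) ≶ θ, which computes the trace of A^3 (the Mathlib-expressible core of Lemma 4.4: there exist graphs that GNNs cannot separate but TREE-G can). -/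
/-!
All 4-regular graphs look alike to propagation of the constant feature: `A *ᵥ 1 = 4 • 1`, hence
`A ^ d *ᵥ 1 = 4 ^ d • 1`. The trace of `A ^ 3` counts closed walks of length three, which are the
ordered triangles, so it vanishes exactly on triangle-free graphs. The circulant graphs on `Fin 8`
with jumps `{±1, ±3}` (this is `K₄,₄`) and `{±1, ±2}` are both 4-regular, and only the second one
has a triangle.
-/

open Matrix Finset

namespace SimpleGraph

variable {V : Type*} [Fintype V] [DecidableEq V] {G : SimpleGraph V} [DecidableRel G.Adj]

theorem IsRegularOfDegree.adjMatrix_pow_mulVec_const {R : Type*} [Semiring R] {k : ℕ}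
    (hG : G.IsRegularOfDegree k) (d : ℕ) (a : R) :
    G.adjMatrix R ^ d *ᵥ Function.const V a = Function.const V ((k : R) ^ d * a) := by
  induction d with
  | zero => simp
  | succ d ih =>
    rw [pow_succ', ← mulVec_mulVec, ih, pow_succ', mul_assoc]
    exact funext fun _ => adjMatrix_mulVec_const_apply_of_regular hG

theorem trace_adjMatrix_pow_three :
    trace (G.adjMatrix ℕ ^ 3) =
      #{t : V × V × V | G.Adj t.1 t.2.1 ∧ G.Adj t.2.1 t.2.2 ∧ G.Adj t.2.2 t.1} := by
  simp only [trace, Matrix.diag, pow_three, mul_apply, Finset.mul_sum, card_filter,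
    ← univ_product_univ, sum_product]
  refine sum_congr rfl fun u _ => sum_congr rfl fun v _ => sum_congr rfl fun w _ => ?_
  by_cases h₁ : G.Adj u v <;> by_cases h₂ : G.Adj v w <;> by_cases h₃ : G.Adj w u <;> simp [*]

theorem trace_adjMatrix_pow_three_eq_zero_iff :
    trace (G.adjMatrix ℕ ^ 3) = 0 ↔ G.CliqueFree 3 := by
  simp only [trace_adjMatrix_pow_three, card_eq_zero, filter_eq_empty_iff, mem_univ, true_implies,
    CliqueFree, is3Clique_iff, Prod.forall]
  constructor
  · rintro h _ ⟨a, b, c, hab, hac, hbc, rfl⟩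
    exact h a b c ⟨hab, hbc, hac.symm⟩
  · rintro h a b c ⟨hab, hbc, hca⟩
    exact h _ ⟨a, b, c, hab, hca.symm, hbc, rfl⟩

end SimpleGraph

open SimpleGraph

theorem circulantGraph_one_three_cliqueFree_three :
    (circulantGraph ({1, 3} : Set (Fin 8))).CliqueFree 3 :=
  Colorable.cliqueFree (n := 2) ⟨Coloring.mk (fun v => ⟨v % 2, by omega⟩) (by decide)⟩
    (by norm_num)

theorem not_circulantGraph_one_two_cliqueFree_three :
    ¬(circulantGraph ({1, 2} : Set (Fin 8))).CliqueFree 3 := fun h =>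
  h {0, 1, 2} (is3Clique_iff.2 ⟨0, 1, 2, by decide, by decide, by decide, rfl⟩)

/-- There exist two 4-regular simple graphs on `Fin 8` whose constant-feature
propagations coincide for every depth `d` (so no unmasked constant-feature
dynamic feature, and no message-passing on constant features, distinguishes
them), yet the traces of the cubes of their adjacency matrices differ, so
TREE-G's cycle-walk split rule separates them. -/
theorem exists_regular_graphs_gnn_indistinguishable_treeg_separable :
    ∃ (G₁ G₂ : SimpleGraph (Fin 8)) (h₁ : DecidableRel G₁.Adj)
      (h₂ : DecidableRel G₂.Adj),
      (∀ v : Fin 8, G₁.degree v = 4) ∧ (∀ v : Fin 8, G₂.degree v = 4) ∧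
      (∀ d : ℕ, (G₁.adjMatrix ℕ) ^ d *ᵥ (fun _ => 1) =
          (G₂.adjMatrix ℕ) ^ d *ᵥ (fun _ => 1)) ∧
      Matrix.trace ((G₁.adjMatrix ℕ) ^ 3) ≠ Matrix.trace ((G₂.adjMatrix ℕ) ^ 3) := by
  have hreg₁ : (circulantGraph ({1, 3} : Set (Fin 8))).IsRegularOfDegree 4 := by
    unfold IsRegularOfDegree; decide
  have hreg₂ : (circulantGraph ({1, 2} : Set (Fin 8))).IsRegularOfDegree 4 := by
    unfold IsRegularOfDegree; decide
  refine ⟨_, _, inferInstance, inferInstance, hreg₁, hreg₂, fun d => ?_, fun h => ?_⟩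
  · exact (hreg₁.adjMatrix_pow_mulVec_const d 1).trans (hreg₂.adjMatrix_pow_mulVec_const d 1).symm
  · rw [trace_adjMatrix_pow_three_eq_zero_iff.2 circulantGraph_one_three_cliqueFree_three,
      eq_comm, trace_adjMatrix_pow_three_eq_zero_iff] at h
    exact not_circulantGraph_one_two_cliqueFree_three h
end
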